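/- Suboptimality bound: let c_θ ∈ ℝ^m, let C ⊆ ℝ^m be a nonempty closed convex set with ‖c‖₂ ≥ δ > 0 for all c ∈ C, let x̂, x* ∈ [0,1]^m, and suppose ⟨c_θ, x*⟩ ≥ ⟨c_θ, x̂⟩. Then ⟨P_C(c_θ)/‖P_C(c_θ)‖, x̂ - x*⟩ ≤ (1/δ) √m · ‖P_C(c_θ) - c_θ‖, where P_C denotes Euclidean projection onto C. -/

import Mathlib

/-! Split `⟪p, x̂ - x*⟫ = ⟪p - c_θ, x̂ - x*⟫ + ⟪c_θ, x̂ - x*⟫`. The second term is nonpositive by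
optimality of `x̂`, and Cauchy–Schwarz bounds the first by `‖p - c_θ‖ · ‖x̂ - x*‖ ≤ ‖p - c_θ‖ · √m`,
since `x̂ - x*` has coordinates in `[-1, 1]`. Normalising `p` costs a factor `‖p‖⁻¹ ≤ δ⁻¹`. -/

open RealInnerProductSpace

theorem EuclideanSpace.norm_le_sqrt_card_mul {ι : Type*} [Fintype ι] {v : EuclideanSpace ℝ ι}
    {r : ℝ} (hr : 0 ≤ r) (hv : ∀ i, ‖v i‖ ≤ r) : ‖v‖ ≤ √(Fintype.card ι) * r := by
  rw [EuclideanSpace.norm_eq, ← Real.sqrt_sq hr, ← Real.sqrt_mul (Nat.cast_nonneg _)]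
  gcongr
  calc ∑ i, ‖v i‖ ^ 2 ≤ ∑ _i : ι, r ^ 2 := by gcongr with i; exact hv i
    _ = Fintype.card ι * r ^ 2 := by simp

theorem EuclideanSpace.norm_sub_le_sqrt_card_of_mem_Icc {ι : Type*} [Fintype ι]
    {x y : EuclideanSpace ℝ ι} (hx : ∀ i, x i ∈ Set.Icc (0 : ℝ) 1)
    (hy : ∀ i, y i ∈ Set.Icc (0 : ℝ) 1) : ‖x - y‖ ≤ √(Fintype.card ι) := by
  simpa using EuclideanSpace.norm_le_sqrt_card_mul zero_le_one
    fun i ↦ Real.dist_le_of_mem_Icc_01 (hx i) (hy i)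

theorem real_inner_le_norm_sub_mul_norm_of_inner_nonpos {F : Type*} [NormedAddCommGroup F]
    [InnerProductSpace ℝ F] {p c d : F} (hcd : ⟪c, d⟫ ≤ 0) : ⟪p, d⟫ ≤ ‖p - c‖ * ‖d‖ :=
  calc ⟪p, d⟫ = ⟪p - c, d⟫ + ⟪c, d⟫ := by rw [← inner_add_left, sub_add_cancel]
    _ ≤ ‖p - c‖ * ‖d‖ := by linarith [real_inner_le_norm (p - c) d]

theorem suboptimality_bound_general (m : ℕ)
    (C : Set (EuclideanSpace ℝ (Fin m))) (δ : ℝ) (hδ : 0 < δ) (hCδ : ∀ c ∈ C, δ ≤ ‖c‖)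
    (cθ xhat xstar : EuclideanSpace ℝ (Fin m))
    (hxhat : ∀ j, xhat j ∈ Set.Icc (0 : ℝ) 1) (hxstar : ∀ j, xstar j ∈ Set.Icc (0 : ℝ) 1)
    (hopt : (inner ℝ cθ xhat : ℝ) ≤ inner ℝ cθ xstar)
    (p : EuclideanSpace ℝ (Fin m)) (hpC : p ∈ C) :
    (inner ℝ ((‖p‖)⁻¹ • p) (xhat - xstar) : ℝ) ≤ (1 / δ) * Real.sqrt m * ‖p - cθ‖ := by
  have hpδ : δ ≤ ‖p‖ := hCδ p hpC
  have hdiam : ‖xhat - xstar‖ ≤ √m := by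
    simpa using EuclideanSpace.norm_sub_le_sqrt_card_of_mem_Icc hxhat hxstar
  have hcθ : ⟪cθ, xhat - xstar⟫ ≤ 0 := by rw [inner_sub_right]; linarith
  have hp : ⟪p, xhat - xstar⟫ ≤ ‖p - cθ‖ * √m :=
    (real_inner_le_norm_sub_mul_norm_of_inner_nonpos hcθ).trans (by gcongr)
  rw [real_inner_smul_left]
  calc ‖p‖⁻¹ * ⟪p, xhat - xstar⟫ ≤ ‖p‖⁻¹ * (‖p - cθ‖ * √m) := by gcongr
    _ ≤ δ⁻¹ * (‖p - cθ‖ * √m) := by gcongr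
    _ = 1 / δ * √m * ‖p - cθ‖ := by ring

theorem suboptimality_bound (m : ℕ)
    (C : Set (EuclideanSpace ℝ (Fin m))) (hne : C.Nonempty) (hclosed : IsClosed C)
    (hconv : Convex ℝ C) (δ : ℝ) (hδ : 0 < δ) (hCδ : ∀ c ∈ C, δ ≤ ‖c‖)
    (cθ xhat xstar : EuclideanSpace ℝ (Fin m))
    (hxhat : ∀ j, xhat j ∈ Set.Icc (0 : ℝ) 1) (hxstar : ∀ j, xstar j ∈ Set.Icc (0 : ℝ) 1)
    (hopt : (inner ℝ cθ xhat : ℝ) ≤ inner ℝ cθ xstar)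
    (p : EuclideanSpace ℝ (Fin m)) (hpC : p ∈ C)
    (hproj : ∀ w ∈ C, ‖cθ - p‖ ≤ ‖cθ - w‖) :
    (inner ℝ ((‖p‖)⁻¹ • p) (xhat - xstar) : ℝ) ≤ (1 / δ) * Real.sqrt m * ‖p - cθ‖ :=
  suboptimality_bound_general m C δ hδ hCδ cθ xhat xstar hxhat hxstar hopt p hpC
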